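/- arXiv:2412.15908 — 6 statements merged into one kernel-verified Lean document; each statement's English description precedes it below -/
import Mathlib

section
/- Let G be a directed acyclic graph with longest-path-length function L, and let G' be obtained from G by adding an edge (v1,v2) with L(v2) - L(v1) - 1 ≥ 0. Then for every vertex v, the longest path length L'(v) in G' equals L(v). -/
/-- A directed walk of length `n` (number of edges) from `u` to `v` in the graph
with edge relation `E`. -/
inductive Walk {V : Type*} (E : V → V → Prop) : V → V → ℕ → Prop
  | nil (v : V) : Walk E v v 0
  | cons {u v w : V} {n : ℕ} : E u v → Walk E v w n → Walk E u w (n + 1)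

/-- A directed graph is acyclic if every closed walk is trivial. -/
def Acyclic {V : Type*} (E : V → V → Prop) : Prop :=
  ∀ v n, Walk E v v n → n = 0

/-- Forward longest path length: the maximum number of edges over all directed
walks ending at `v`. -/
noncomputable def LPL {V : Type*} (E : V → V → Prop) (v : V) : ℕ :=
  sSup {n | ∃ u, Walk E u v n}

/-- Longest path length from `u` to `v`. -/
noncomputable def LPLfrom {V : Type*} (E : V → V → Prop) (u v : V) : ℕ :=
  sSup {n | Walk E u v n}

namespace Aux

theorem walk_mono {V : Type*} {E E' : V → V → Prop} (h : ∀ a b, E a b → E' a b)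
    {u v : V} {n : ℕ} (w : Walk E u v n) : Walk E' u v n := by
  induction w with
  | nil v => exact Walk.nil v
  | cons e _ ih => exact Walk.cons (h _ _ e) ih

theorem walk_snoc {V : Type*} {E : V → V → Prop} {u v w : V} {n : ℕ}
    (hw : Walk E u v n) (e : E v w) : Walk E u w (n + 1) := by
  induction hw with
  | nil v => exact Walk.cons e (Walk.nil _)
  | cons e' _ ih => exact Walk.cons e' (ih e)

theorem walk_toFun {V : Type*} {E : V → V → Prop} {u v : V} {n : ℕ}
    (hw : Walk E u v n) :
    ∃ f : ℕ → V, f 0 = u ∧ f n = v ∧ ∀ i < n, E (f i) (f (i + 1)) := by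
  induction hw with
  | nil v => exact ⟨fun _ => v, rfl, rfl, fun i hi => absurd hi (Nat.not_lt_zero i)⟩
  | @cons u v w n e hw ih =>
    obtain ⟨f, hf0, hfn, hstep⟩ := ih
    refine ⟨fun i => if i = 0 then u else f (i - 1), by simp, by simp [hfn], ?_⟩
    intro i hi
    rcases Nat.eq_zero_or_pos i with h0 | h0
    · subst h0; simpa [hf0] using e
    · have h1 : ¬ (i = 0) := by omega
      have h2 : ¬ (i + 1 = 0) := by omega
      simp only [h1, h2, if_false]
      have : i - 1 < n := by omega
      have := hstep (i - 1) this
      have heq : i - 1 + 1 = i + 1 - 1 := by omega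
      rwa [heq] at this

theorem fun_toWalk {V : Type*} {E : V → V → Prop} (f : ℕ → V) (a : ℕ) :
    ∀ k, (∀ i, a ≤ i → i < a + k → E (f i) (f (i + 1))) →
      Walk E (f a) (f (a + k)) k := by
  intro k
  induction k with
  | zero => intro _; exact Walk.nil _
  | succ k ih =>
    intro h
    have hw := ih (fun i h1 h2 => h i h1 (by omega))
    have e : E (f (a + k)) (f (a + k + 1)) := h _ (by omega) (by omega)
    exact walk_snoc hw e

theorem walk_bound {V : Type*} [Fintype V] {E : V → V → Prop} (hacyc : Acyclic E)
    {u v : V} {n : ℕ} (hw : Walk E u v n) : n < Fintype.card V := by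
  by_contra hc
  push_neg at hc
  obtain ⟨f, _, _, hstep⟩ := walk_toFun hw
  have hninj : ¬ Function.Injective (fun i : Fin (n + 1) => f i) := by
    intro hinj
    have := Fintype.card_le_of_injective _ hinj
    simp at this; omega
  simp only [Function.Injective, not_forall] at hninj
  obtain ⟨i, j, hij, hne⟩ := hninj
  wlog hlt : (i : ℕ) < (j : ℕ) generalizing i j
  · have hvne : (i : ℕ) ≠ (j : ℕ) := fun h => hne (Fin.ext h)
    exact this j i hij.symm (Ne.symm hne) (by omega)
  · have hw2 : Walk E (f i) (f (i + (j - i : ℕ))) ((j : ℕ) - i) := by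
      apply fun_toWalk
      intro k h1 h2
      exact hstep k (by omega)
    have heq : (i : ℕ) + ((j : ℕ) - i) = j := by omega
    rw [heq] at hw2
    rw [hij] at hw2
    have := hacyc _ _ hw2
    omega

theorem bddAbove_LPLset {V : Type*} [Fintype V] {E : V → V → Prop}
    (hacyc : Acyclic E) (v : V) : BddAbove {n | ∃ u, Walk E u v n} := by
  refine ⟨Fintype.card V, ?_⟩
  rintro n ⟨u, hw⟩
  exact le_of_lt (walk_bound hacyc hw)

theorem LPL_step {V : Type*} [Fintype V] {E : V → V → Prop} (hacyc : Acyclic E)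
    {u w : V} (e : E u w) : LPL E u + 1 ≤ LPL E w := by
  have hne : {n | ∃ x, Walk E x u n}.Nonempty := ⟨0, u, Walk.nil u⟩
  have hmem : LPL E u ∈ {n | ∃ x, Walk E x u n} :=
    Nat.sSup_mem hne (bddAbove_LPLset hacyc u)
  obtain ⟨x, hwx⟩ := hmem
  exact le_csSup (bddAbove_LPLset hacyc w) ⟨x, walk_snoc hwx e⟩

end Aux

/-- Adding an edge of non-negative slack to a DAG preserves all longest path lengths. -/
theorem stmt1 {V : Type*} [Fintype V] (E : V → V → Prop) (hacyc : Acyclic E)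
    (v1 v2 : V) (hslack : (0 : ℤ) ≤ (LPL E v2 : ℤ) - (LPL E v1 : ℤ) - 1) :
    ∀ v, LPL (fun a b => E a b ∨ (a = v1 ∧ b = v2)) v = LPL E v := by
  set E' : V → V → Prop := fun a b => E a b ∨ (a = v1 ∧ b = v2) with hE'
  have hslack' : LPL E v1 + 1 ≤ LPL E v2 := by omega
  -- key claim
  have claim : ∀ {u v : V} {n : ℕ}, Walk E' u v n → LPL E u + n ≤ LPL E v := by
    intro u v n hw
    induction hw with
    | nil v => simp
    | @cons u w v n e hw ih =>
      rcases e with e | ⟨h1, h2⟩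
      · have := Aux.LPL_step hacyc e
        omega
      · subst h1; subst h2
        omega
  intro v
  have hne' : {n | ∃ u, Walk E' u v n}.Nonempty := ⟨0, v, Walk.nil v⟩
  have hne : {n | ∃ u, Walk E u v n}.Nonempty := ⟨0, v, Walk.nil v⟩
  have hbdd' : BddAbove {n | ∃ u, Walk E' u v n} := by
    refine ⟨LPL E v, ?_⟩
    rintro n ⟨u, hw⟩
    have := claim hw
    omega
  apply le_antisymm
  · apply csSup_le hne'
    rintro n ⟨u, hw⟩
    have := claim hw
    omega
  · apply csSup_le hne
    rintro n ⟨u, hw⟩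
    exact le_csSup hbdd' ⟨u, Aux.walk_mono (fun a b h => Or.inl h) hw⟩
end

section
/- In a two-agent TPG containing the two Type-2 edges e1=(v^i_m, v^j_n) and e2=(v^j_q, v^i_p) with p ≤ m and n ≤ q (together with all Type-1 edges), the graph contains a directed cycle. -/
/-- Type-1 edges for a single agent with `z + 1` vertices indexed `0, ..., z`:
an edge from index `a` to index `a + 1` whenever `a + 1 ≤ z`. -/
def T1 (z : ℕ) (a b : ℕ) : Prop := b = a + 1 ∧ b ≤ z

/-- Edge relation of a two-agent TPG: `Sum.inl p` is agent `i`'s vertex `v^i_p`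
and `Sum.inr q` is agent `j`'s vertex `v^j_q`. Type-1 edges connect consecutive
vertices of each agent; `Tij m n` means there is a Type-2 edge `(v^i_m, v^j_n)`
and `Tji q p` means there is a Type-2 edge `(v^j_q, v^i_p)`. -/
def TPGEdge (zi zj : ℕ) (Tij Tji : ℕ → ℕ → Prop) : ℕ ⊕ ℕ → ℕ ⊕ ℕ → Prop
  | .inl a, .inl b => T1 zi a b
  | .inr a, .inr b => T1 zj a b
  | .inl a, .inr b => Tij a b
  | .inr a, .inl b => Tji a b

theorem walk_append {V : Type*} {E : V → V → Prop} {u v w : V} {a b : ℕ}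
    (h1 : Walk E u v a) (h2 : Walk E v w b) : Walk E u w (a + b) := by
  induction h1 with
  | nil => simpa using h2
  | cons e _ ih =>
    have := Walk.cons e (ih h2)
    simpa [Nat.add_assoc, Nat.add_comm, Nat.add_left_comm] using this

theorem walkL (zi zj : ℕ) (Tij Tji : ℕ → ℕ → Prop) {a b : ℕ} (hab : a ≤ b) (hb : b ≤ zi) :
    Walk (TPGEdge zi zj Tij Tji) (.inl a) (.inl b) (b - a) := by
  induction b with
  | zero => simpa [Nat.le_zero.mp hab] using Walk.nil (E := TPGEdge zi zj Tij Tji) (Sum.inl 0)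
  | succ b ih =>
    rcases Nat.lt_or_ge a (b+1) with h | h
    · have hab' : a ≤ b := Nat.lt_succ_iff.mp h
      have w := ih hab' (Nat.le_of_succ_le hb)
      have e : TPGEdge zi zj Tij Tji (.inl b) (.inl (b+1)) := ⟨rfl, hb⟩
      have := walk_append w (Walk.cons e (Walk.nil _))
      simpa [Nat.succ_sub hab'] using this
    · have : a = b + 1 := le_antisymm hab h
      subst this; simpa using Walk.nil (E := TPGEdge zi zj Tij Tji) (Sum.inl (b+1))

theorem walkR (zi zj : ℕ) (Tij Tji : ℕ → ℕ → Prop) {a b : ℕ} (hab : a ≤ b) (hb : b ≤ zj) :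
    Walk (TPGEdge zi zj Tij Tji) (.inr a) (.inr b) (b - a) := by
  induction b with
  | zero => simpa [Nat.le_zero.mp hab] using Walk.nil (E := TPGEdge zi zj Tij Tji) (Sum.inr 0)
  | succ b ih =>
    rcases Nat.lt_or_ge a (b+1) with h | h
    · have hab' : a ≤ b := Nat.lt_succ_iff.mp h
      have w := ih hab' (Nat.le_of_succ_le hb)
      have e : TPGEdge zi zj Tij Tji (.inr b) (.inr (b+1)) := ⟨rfl, hb⟩
      have := walk_append w (Walk.cons e (Walk.nil _))
      simpa [Nat.succ_sub hab'] using this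
    · have : a = b + 1 := le_antisymm hab h
      subst this; simpa using Walk.nil (E := TPGEdge zi zj Tij Tji) (Sum.inr (b+1))

/-- Conversely, two opposite-direction Type-2 edges `(v^i_m, v^j_n)` and
`(v^j_q, v^i_p)` with `p ≤ m` and `n ≤ q` yield a directed cycle in the
two-agent TPG. -/
theorem stmt4 (zi zj : ℕ) (Tij Tji : ℕ → ℕ → Prop) (m n p q : ℕ)
    (h1 : Tij m n) (h2 : Tji q p) (hpm : p ≤ m) (hnq : n ≤ q)
    (hm : m ≤ zi) (hq : q ≤ zj) :
    ∃ v k, 0 < k ∧ Walk (TPGEdge zi zj Tij Tji) v v k := by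
  refine ⟨.inl p, (m - p) + (((q - n) + 1) + 1), by omega, ?_⟩
  have w1 := walkL zi zj Tij Tji hpm hm
  have e1 : TPGEdge zi zj Tij Tji (.inl m) (.inr n) := h1
  have w2 := walkR zi zj Tij Tji hnq hq
  have e2 : TPGEdge zi zj Tij Tji (.inr q) (.inl p) := h2
  exact walk_append w1 (Walk.cons e1 (walk_append w2 (Walk.cons e2 (Walk.nil _))))
end

section
/- Let G be a DAG with forward longest-path function L and backward longest path lengths to a goal g, and let e=(v_{q+1}, v_p) be an edge not in G with v_p connected to g in G. If G' is any acyclic supergraph of G containing e, then L'(g) - L(g) ≥ -Sl(e) - Sl(v_p, g), where Sl(e)=L(v_p)-L(v_{q+1})-1 and Sl(v_p,g)=L(g)-L(v_p)-L(v_p,g). -/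
section StmtAux

variable {V : Type*} {E E' : V → V → Prop}

theorem Walk.mono (hsub : ∀ a b, E a b → E' a b) {u v n} (w : Walk E u v n) :
    Walk E' u v n := by
  induction w with
  | nil v => exact Walk.nil v
  | cons h _ ih => exact Walk.cons (hsub _ _ h) ih

theorem Walk.append {u v w m n} (h1 : Walk E u v m) (h2 : Walk E v w n) :
    Walk E u w (m + n) := by
  induction h1 with
  | nil v => simpa using h2
  | cons h _ ih =>
      have := Walk.cons h (ih h2)
      simpa [Nat.add_right_comm] using this

/-- From a walk, extract the list of visited vertices. -/
theorem Walk.toList {u v n} (w : Walk E u v n) :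
    ∃ l : List V, l.Chain' E ∧ l.head? = some u ∧ l.getLast? = some v ∧
      l.length = n + 1 := by
  induction w with
  | nil v => exact ⟨[v], List.isChain_singleton v, by simp, by simp, by simp⟩
  | @cons a b c m h _ ih =>
      obtain ⟨l, hc, hh, hl, hlen⟩ := ih
      refine ⟨a :: l, ?_, by simp, ?_, by simp [hlen]⟩
      · change List.IsChain E (a :: l); rw [List.isChain_cons]
        exact ⟨fun y hy => by rw [hh] at hy; cases hy; exact h, hc⟩
      · cases l with
        | nil => simp at hlen
        | cons x xs => simpa using hl

/-- From a chain of vertices, build a walk. -/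
theorem walk_of_chain' : ∀ (l : List V), l.Chain' E → ∀ u v, l.head? = some u →
    l.getLast? = some v → Walk E u v (l.length - 1) := by
  intro l
  induction l with
  | nil => intro _ u v h; simp at h
  | cons a l ih =>
      intro hc u v hh hl
      cases l with
      | nil =>
          simp at hh hl
          subst hh; subst hl
          exact Walk.nil a
      | cons b xs =>
          change List.IsChain E (a :: b :: xs) at hc; rw [List.isChain_cons_cons] at hc
          simp only [List.head?_cons, Option.some.injEq] at hh
          subst hh
          have hw := ih hc.2 b v (by simp) (by simpa using hl)
          have := Walk.cons hc.1 hw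
          simpa [Nat.succ_sub_one] using this

theorem dup_split {x : V} {l : List V} (h : List.Duplicate x l) :
    ∃ l₁ l₂ l₃ : List V, l = l₁ ++ x :: l₂ ++ x :: l₃ := by
  induction h with
  | cons_mem hm =>
      obtain ⟨s, t, rfl⟩ := List.append_of_mem hm
      exact ⟨[], s, t, by simp⟩
  | @cons_duplicate y l' _ ih =>
      obtain ⟨l₁, l₂, l₃, rfl⟩ := ih
      exact ⟨y :: l₁, l₂, l₃, by simp⟩

theorem chain'_nodup (hE : Acyclic E) {l : List V} (hc : l.Chain' E) :
    l.Nodup := by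
  by_contra hnd
  obtain ⟨x, hx⟩ := List.exists_duplicate_iff_not_nodup.2 hnd
  obtain ⟨l₁, l₂, l₃, rfl⟩ := dup_split hx
  have hinf : (x :: l₂ ++ [x]) <:+: (l₁ ++ x :: l₂ ++ x :: l₃) :=
    ⟨l₁, l₃, by simp⟩
  have hc' : (x :: l₂ ++ [x]).Chain' E := hc.infix hinf
  have hw := walk_of_chain' _ hc' x x (by simp)
    (List.getLast?_concat)
  have := hE x _ hw
  simp at this

theorem walk_lt_card [Fintype V] (hE : Acyclic E) {u v n} (w : Walk E u v n) :
    n < Fintype.card V := by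
  obtain ⟨l, hc, _, _, hlen⟩ := w.toList
  have := (chain'_nodup hE hc).length_le_card
  omega

theorem bddAbove [Fintype V] (hE : Acyclic E) (v : V) :
    BddAbove {n | ∃ u, Walk E u v n} :=
  ⟨Fintype.card V, fun n ⟨_, w⟩ => (walk_lt_card hE w).le⟩

end StmtAux

/-- Fixing a conflicting edge `e = (v_{q+1}, v_p)` increases the longest path
length at the goal `g` by at least `-Sl(e) - Sl(v_p, g)`. -/
theorem stmt11 {V : Type*} [Fintype V] (E E' : V → V → Prop)
    (hE : Acyclic E) (hsub : ∀ a b, E a b → E' a b) (hE' : Acyclic E')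
    (vq1 vp g : V) (he : E' vq1 vp) (hconn : ∃ n, Walk E vp g n) :
    (LPL E' g : ℤ) - (LPL E g : ℤ) ≥
      -((LPL E vp : ℤ) - (LPL E vq1 : ℤ) - 1) -
        ((LPL E g : ℤ) - (LPL E vp : ℤ) - (LPLfrom E vp g : ℤ)) := by
  have h1 : ∃ u, Walk E u vq1 (LPL E vq1) := by
    have : LPL E vq1 ∈ {n | ∃ u, Walk E u vq1 n} :=
      Nat.sSup_mem ⟨0, vq1, Walk.nil vq1⟩ (bddAbove hE vq1)
    exact this
  have h2 : Walk E vp g (LPLfrom E vp g) := by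
    have hbdd : BddAbove {n | Walk E vp g n} :=
      ⟨Fintype.card V, fun n w => (walk_lt_card hE w).le⟩
    exact Nat.sSup_mem hconn hbdd
  obtain ⟨u, hw1⟩ := h1
  have hw : Walk E' u g (LPL E vq1 + (LPLfrom E vp g + 1)) :=
    (hw1.mono hsub).append (Walk.cons he (h2.mono hsub))
  have hle : LPL E vq1 + (LPLfrom E vp g + 1) ≤ LPL E' g :=
    le_csSup (bddAbove hE' g) ⟨u, hw⟩
  have : (LPL E vq1 : ℤ) + LPLfrom E vp g + 1 ≤ (LPL E' g : ℤ) := by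
    exact_mod_cast by omega
  linarith
end

section
/- If all switchable edges of an STPG have non-negative slack with respect to its reduced TPG, then fixing all switchable edges yields an acyclic TPG whose longest path length at every vertex equals that of the reduced TPG; in particular, its execution cost equals the execution cost of the reduced TPG. -/
section Aux

variable {V : Type*}

lemma walk_mono {E E' : V → V → Prop} (h : ∀ a b, E a b → E' a b) :
    ∀ {u v n}, Walk E u v n → Walk E' u v n := by
  intro u v n w
  induction w with
  | nil v => exact Walk.nil v
  | cons e _ ih => exact Walk.cons (h _ _ e) ih

lemma walk_append_edge {E : V → V → Prop} :
    ∀ {a u v m}, Walk E a u m → E u v → Walk E a v (m + 1) := by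
  intro a u v m w
  induction w with
  | nil x => intro e; exact Walk.cons e (Walk.nil v)
  | cons e _ ih => intro e'; exact Walk.cons e (ih e')

lemma walk_fun {E : V → V → Prop} :
    ∀ {u v n}, Walk E u v n →
      ∃ f : ℕ → V, f 0 = u ∧ f n = v ∧ ∀ i < n, E (f i) (f (i + 1)) := by
  intro u v n w
  induction w with
  | nil x => exact ⟨fun _ => x, rfl, rfl, fun i hi => absurd hi (Nat.not_lt_zero i)⟩
  | @cons a b c m e _ ih =>
    obtain ⟨f, h0, hn, he⟩ := ih
    refine ⟨fun i => if i = 0 then a else f (i - 1), by simp, by simp [hn], ?_⟩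
    intro i hi
    rcases Nat.eq_zero_or_pos i with rfl | hpos
    · simpa [h0] using e
    · have h1 : i ≠ 0 := hpos.ne'
      simp only [h1, if_neg, Nat.add_eq_zero, and_false, if_false]
      have : i - 1 + 1 = i := Nat.succ_pred_eq_of_pos hpos
      have h2 := he (i - 1) (by omega)
      rwa [this] at h2

lemma walk_of_fun {E : V → V → Prop} (f : ℕ → V) (n : ℕ)
    (hf : ∀ i < n, E (f i) (f (i + 1))) :
    ∀ d i, i + d ≤ n → Walk E (f i) (f (i + d)) d := by
  intro d
  induction d with
  | zero => intro i _; exact Walk.nil _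
  | succ d ih =>
    intro i hi
    have e : E (f i) (f (i + 1)) := hf i (by omega)
    have w := ih (i + 1) (by omega)
    have : i + 1 + d = i + (d + 1) := by omega
    rw [this] at w
    exact Walk.cons e w

lemma walk_len_lt [Fintype V] {E : V → V → Prop} (hac : Acyclic E) :
    ∀ {u v n}, Walk E u v n → n < Fintype.card V := by
  intro u v n w
  by_contra hn
  push_neg at hn
  obtain ⟨f, h0, hnv, he⟩ := walk_fun w
  have hninj : ¬ Function.Injective (fun i : Fin (n + 1) => f i) := by
    intro hinj
    have := Fintype.card_le_of_injective _ hinj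
    simp at this; omega
  rw [Function.not_injective_iff] at hninj
  obtain ⟨i, j, hij, hne⟩ := hninj
  wlog hlt : (i : ℕ) < (j : ℕ) generalizing i j
  · exact this j i hij.symm hne.symm (by have hne2 : (i:ℕ) ≠ j := fun h => hne (Fin.ext h); omega)
  · have w' := walk_of_fun f n he ((j : ℕ) - i) i (by omega)
    have hji : (i : ℕ) + ((j : ℕ) - i) = j := by omega
    rw [hji] at w'
    rw [← show f (i:ℕ) = f (j:ℕ) from hij] at w'
    have := hac (f i) _ w'
    omega

lemma walk_bdd [Fintype V] {E : V → V → Prop} (hac : Acyclic E) (v : V) :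
    BddAbove {n | ∃ u, Walk E u v n} := by
  refine ⟨Fintype.card V, fun n hn => ?_⟩
  obtain ⟨u, w⟩ := hn
  exact (walk_len_lt hac w).le

lemma walk_nonempty {E : V → V → Prop} (v : V) :
    Set.Nonempty {n | ∃ u, Walk E u v n} := ⟨0, v, Walk.nil v⟩

/-- If an edge relation `E'` satisfies: every edge increases `L` strictly
(`L a + 1 ≤ L b`), then any walk of length `n` gives `L u + n ≤ L v`. -/
lemma walk_incr {E' : V → V → Prop} {L : V → ℕ}
    (h : ∀ a b, E' a b → L a + 1 ≤ L b) :
    ∀ {u v n}, Walk E' u v n → L u + n ≤ L v := by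
  intro u v n w
  induction w with
  | nil x => simp
  | cons e _ ih =>
    have := h _ _ e
    omega

end Aux

/-- If every switchable edge of an STPG has non-negative slack with respect to
the reduced TPG `(V, E1 ∪ N)`, then fixing all switchable edges yields an
acyclic TPG with the same longest path lengths, hence the same execution cost
(sum over agents of longest path length at their goals). -/
theorem stmt13 {V ι : Type*} [Fintype V] [Fintype ι]
    (E1 N S : V → V → Prop) (g : ι → V)
    (hacyc : Acyclic (fun a b => E1 a b ∨ N a b))
    (hslack : ∀ u v, S u v →
      (0 : ℤ) ≤ (LPL (fun a b => E1 a b ∨ N a b) v : ℤ) -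
        (LPL (fun a b => E1 a b ∨ N a b) u : ℤ) - 1) :
    Acyclic (fun a b => E1 a b ∨ N a b ∨ S a b) ∧
    (∀ v, LPL (fun a b => E1 a b ∨ N a b ∨ S a b) v =
      LPL (fun a b => E1 a b ∨ N a b) v) ∧
    ∑ i, LPL (fun a b => E1 a b ∨ N a b ∨ S a b) (g i) =
      ∑ i, LPL (fun a b => E1 a b ∨ N a b) (g i) := by
  set E : V → V → Prop := fun a b => E1 a b ∨ N a b with hE
  set E' : V → V → Prop := fun a b => E1 a b ∨ N a b ∨ S a b with hE'
  set L : V → ℕ := LPL E with hL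
  -- every reduced edge increases L
  have hedge : ∀ a b, E a b → L a + 1 ≤ L b := by
    intro a b e
    have hmem : L a ∈ {n | ∃ u, Walk E u a n} :=
      Nat.sSup_mem (walk_nonempty a) (walk_bdd hacyc a)
    obtain ⟨u, w⟩ := hmem
    have w' : Walk E u b (L a + 1) := walk_append_edge w e
    exact le_csSup (walk_bdd hacyc b) ⟨u, w'⟩
  -- every fixed-graph edge increases L
  have hedge' : ∀ a b, E' a b → L a + 1 ≤ L b := by
    intro a b e
    rcases e with h | h | h
    · exact hedge a b (Or.inl h)
    · exact hedge a b (Or.inr h)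
    · have := hslack a b h
      omega
  have hkey : ∀ {u v n}, Walk E' u v n → L u + n ≤ L v :=
    fun w => walk_incr hedge' w
  have hac' : Acyclic E' := by
    intro v n w
    have := hkey w
    omega
  have hLeq : ∀ v, LPL E' v = LPL E v := by
    intro v
    apply le_antisymm
    · apply csSup_le (walk_nonempty v)
      rintro n ⟨u, w⟩
      have h := hkey w
      show n ≤ L v
      omega
    · apply csSup_le_csSup
      · refine ⟨L v, fun n hn => ?_⟩
        obtain ⟨u, w⟩ := hn
        have := hkey w
        omega
      · exact walk_nonempty v
      · rintro n ⟨u, w⟩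
        exact ⟨u, walk_mono (fun a b h => by
          rcases h with h | h
          · exact Or.inl h
          · exact Or.inr (Or.inl h)) w⟩
  exact ⟨hac', hLeq, Finset.sum_congr rfl fun i _ => hLeq (g i)⟩
end

section
/- Consider the two-agent STPG for the 'parallel' pattern where agents 1 and 2 both traverse locations in the same order, giving switchable edges e_k from agent 1's vertex (k+1) to agent 2's vertex k for k = 1,...,K (with reversed edge Re(e_k) from agent 2's vertex (k+1) to agent 1's vertex k). Then in any acyclic settlement, all edges e_k receive the same choice: either all are fixed or all are reversed. -/
/-- Edge relation of the two-agent 'parallel pattern' STPG under a settlement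
`b`. Agent 1's vertices are `Sum.inl p` (`u_p`), agent 2's are `Sum.inr p`
(`w_p`), each chain with Type-1 edges up to index `z`. For `1 ≤ k ≤ K`, the
switchable edge `e_k = (u_{k+1}, w_k)` is fixed if `b k = true` (adding
`(u_{k+1}, w_k)`) and reversed if `b k = false` (adding `(w_{k+1}, u_k)`). -/
def ParallelEdge (z K : ℕ) (b : ℕ → Bool) : ℕ ⊕ ℕ → ℕ ⊕ ℕ → Prop :=
  fun x y =>
    (match x, y with
      | .inl a, .inl c => c = a + 1 ∧ c ≤ z
      | .inr a, .inr c => c = a + 1 ∧ c ≤ z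
      | _, _ => False) ∨
    ∃ k, 1 ≤ k ∧ k ≤ K ∧
      ((b k = true ∧ x = .inl (k + 1) ∧ y = .inr k) ∨
       (b k = false ∧ x = .inr (k + 1) ∧ y = .inl k))

/-- In the parallel pattern, any acyclic settlement assigns the same choice to
all switchable edges: either all are fixed or all are reversed. -/
theorem stmt16 (z K : ℕ) (hzK : K + 1 ≤ z) (b : ℕ → Bool)
    (hacyc : Acyclic (ParallelEdge z K b)) :
    ∀ k k', 1 ≤ k → k ≤ K → 1 ≤ k' → k' ≤ K → b k = b k' := by
  have adj : ∀ k, 1 ≤ k → k + 1 ≤ K → b k = b (k + 1) := by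
    intro k hk1 hkK
    by_contra hne
    have hkz : k + 1 ≤ z := le_trans (le_trans hkK (Nat.le_succ K)) hzK
    have hkz2 : k + 2 ≤ z := le_trans (Nat.add_le_add_right hkK 1) hzK
    cases hb : b k <;> cases hb' : b (k + 1)
    · exact hne (by rw [hb, hb'])
    · -- b k = false, b (k+1) = true : w_{k+1} → u_k → u_{k+1} → u_{k+2} → w_{k+1}
      have w : Walk (ParallelEdge z K b) (.inr (k+1)) (.inr (k+1)) 4 := by
        refine .cons (Or.inr ⟨k, hk1, le_trans (Nat.le_succ k) hkK, Or.inr ⟨hb, rfl, rfl⟩⟩) ?_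
        refine .cons (show ParallelEdge z K b (.inl k) (.inl (k+1)) from Or.inl ⟨rfl, hkz⟩) ?_
        refine .cons (show ParallelEdge z K b (.inl (k+1)) (.inl (k+2)) from Or.inl ⟨rfl, hkz2⟩) ?_
        refine .cons (Or.inr ⟨k+1, le_trans hk1 (Nat.le_succ k), hkK, Or.inl ⟨hb', rfl, rfl⟩⟩) (.nil _)
      exact absurd (hacyc _ _ w) (by norm_num)
    · -- b k = true, b (k+1) = false : u_{k+1} → w_k → w_{k+1} → w_{k+2} → u_{k+1}
      have w : Walk (ParallelEdge z K b) (.inl (k+1)) (.inl (k+1)) 4 := by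
        refine .cons (Or.inr ⟨k, hk1, le_trans (Nat.le_succ k) hkK, Or.inl ⟨hb, rfl, rfl⟩⟩) ?_
        refine .cons (show ParallelEdge z K b (.inr k) (.inr (k+1)) from Or.inl ⟨rfl, hkz⟩) ?_
        refine .cons (show ParallelEdge z K b (.inr (k+1)) (.inr (k+2)) from Or.inl ⟨rfl, hkz2⟩) ?_
        refine .cons (Or.inr ⟨k+1, le_trans hk1 (Nat.le_succ k), hkK, Or.inr ⟨hb', rfl, rfl⟩⟩) (.nil _)
      exact absurd (hacyc _ _ w) (by norm_num)
    · exact hne (by rw [hb, hb'])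
  have base : ∀ k, 1 ≤ k → k ≤ K → b k = b 1 := by
    intro k
    induction k with
    | zero => intro h; omega
    | succ n ih =>
      intro _ hK
      rcases Nat.eq_or_lt_of_le (Nat.one_le_iff_ne_zero.mpr (Nat.succ_ne_zero n)) with h | h
      · have : n = 0 := by omega
        subst this; rfl
      · have hn1 : 1 ≤ n := by omega
        rw [← adj n hn1 hK]
        exact ih hn1 (by omega)
  intro k k' hk1 hkK hk'1 hk'K
  rw [base k hk1 hkK, base k' hk'1 hk'K]
end

section
/- For a switchable edge e with Sl(e) ≥ 0 in an STPG whose reduced TPG is acyclic with longest-path function L, fixing e yields an STPG whose reduced TPG is acyclic, has the same longest-path function L, and hence every other switchable edge's slack is unchanged. -/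
lemma Walk.snoc {V : Type*} {E : V → V → Prop} {a b c : V} {n : ℕ}
    (w : Walk E a b n) (h : E b c) : Walk E a c (n + 1) := by
  induction w with
  | nil v => exact .cons h (.nil c)
  | cons h' w ih => exact .cons h' (ih h)

lemma walk_mono_s19 {V : Type*} {E E' : V → V → Prop} (hE : ∀ x y, E x y → E' x y)
    {a b : V} {n : ℕ} (w : Walk E a b n) : Walk E' a b n := by
  induction w with
  | nil v => exact .nil v
  | cons h w ih => exact .cons (hE _ _ h) ih

lemma chain_of_walk {V : Type*} {E : V → V → Prop} {a b : V} {n : ℕ}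
    (w : Walk E a b n) : ∃ f : ℕ → V, f 0 = a ∧ f n = b ∧
      ∀ i < n, E (f i) (f (i + 1)) := by
  induction w with
  | nil v => exact ⟨fun _ => v, rfl, rfl, fun i hi => absurd hi (Nat.not_lt_zero i)⟩
  | cons h w ih =>
    obtain ⟨f, hf0, hfn, hfe⟩ := ih
    refine ⟨fun i => if i = 0 then _ else f (i - 1), if_pos rfl, by simp [hfn], ?_⟩
    intro i hi
    cases i with
    | zero => simpa [hf0] using h
    | succ k => simpa using hfe k (by omega)

lemma walk_of_chain {V : Type*} {E : V → V → Prop} (f : ℕ → V) :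
    ∀ k i, (∀ j, i ≤ j → j < i + k → E (f j) (f (j + 1))) →
      Walk E (f i) (f (i + k)) k := by
  intro k
  induction k with
  | zero => intro i _; exact .nil _
  | succ k ih =>
    intro i h
    have w := ih i (fun j hj hj' => h j hj (by omega))
    have := w.snoc (h (i + k) (by omega) (by omega))
    simpa [Nat.add_assoc] using this

lemma walk_len_lt_card {V : Type*} [Fintype V] {E : V → V → Prop}
    (hE : Acyclic E) {a b : V} {n : ℕ} (w : Walk E a b n) :
    n < Fintype.card V := by
  by_contra hn
  push_neg at hn
  obtain ⟨f, hf0, hfn, hfe⟩ := chain_of_walk w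
  have hcard : Fintype.card V < Fintype.card (Fin (n + 1)) := by
    simpa using Nat.lt_succ_of_le hn
  obtain ⟨i, j, hij, hfij⟩ :=
    Fintype.exists_ne_map_eq_of_card_lt (fun i : Fin (n + 1) => f i) hcard
  wlog hlt : (i : ℕ) < (j : ℕ) generalizing i j
  · exact this j i hij.symm hfij.symm (by omega)
  have w2 : Walk E (f i) (f ((i : ℕ) + ((j : ℕ) - i))) ((j : ℕ) - i) := by
    refine walk_of_chain f _ _ (fun m hm hm' => hfe m (by omega))
  rw [show (i : ℕ) + ((j : ℕ) - i) = j by omega] at w2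
  rw [← hfij] at w2
  have := hE _ _ w2
  omega

lemma bddAbove_walkSet {V : Type*} [Fintype V] {E : V → V → Prop}
    (hE : Acyclic E) (b : V) : BddAbove {n | ∃ u, Walk E u b n} := by
  refine ⟨Fintype.card V, fun n hn => ?_⟩
  obtain ⟨a, w⟩ := hn
  exact le_of_lt (walk_len_lt_card hE w)

/-- Fixing a switchable edge `e = (u, v)` with non-negative slack keeps the
reduced TPG acyclic, preserves the longest path function, and hence preserves
the slack of every other (pair of vertices forming a) switchable edge. -/
theorem stmt19 {V : Type*} [Fintype V] (R : V → V → Prop) (hR : Acyclic R)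
    (u v : V) (hslack : (0 : ℤ) ≤ (LPL R v : ℤ) - (LPL R u : ℤ) - 1) :
    Acyclic (fun a b => R a b ∨ (a = u ∧ b = v)) ∧
    (∀ w, LPL (fun a b => R a b ∨ (a = u ∧ b = v)) w = LPL R w) ∧
    (∀ a b, (LPL (fun a b => R a b ∨ (a = u ∧ b = v)) b : ℤ) -
        (LPL (fun a b => R a b ∨ (a = u ∧ b = v)) a : ℤ) - 1 =
      (LPL R b : ℤ) - (LPL R a : ℤ) - 1) := by
  set E' : V → V → Prop := fun a b => R a b ∨ (a = u ∧ b = v) with hE'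
  -- LPL R increases along any R edge
  have hedge : ∀ a b : V, R a b → LPL R a + 1 ≤ LPL R b := by
    intro a b hab
    have hne : Set.Nonempty {n | ∃ s, Walk R s a n} := ⟨0, a, .nil a⟩
    have hmem := Nat.sSup_mem hne (bddAbove_walkSet hR a)
    obtain ⟨s, w⟩ := hmem
    exact le_csSup (bddAbove_walkSet hR b) ⟨s, w.snoc hab⟩
  have huv : LPL R u + 1 ≤ LPL R v := by omega
  -- key: along E' walks, LPL R increases by at least the length
  have hkey : ∀ a b n, Walk E' a b n → LPL R a + n ≤ LPL R b := by
    intro a b n w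
    induction w with
    | nil _ => omega
    | cons h w ih =>
      rcases h with h | ⟨rfl, rfl⟩
      · have := hedge _ _ h; omega
      · omega
  have hacyc : Acyclic E' := by
    intro w n hw
    have := hkey _ _ _ hw
    omega
  have hlpl : ∀ w, LPL E' w = LPL R w := by
    intro w
    refine le_antisymm ?_ ?_
    · refine csSup_le ⟨0, w, .nil w⟩ ?_
      rintro n ⟨a, hw⟩
      have := hkey _ _ _ hw
      omega
    · refine csSup_le_csSup ?_ ⟨0, w, .nil w⟩ ?_
      · exact bddAbove_walkSet hacyc w
      · rintro n ⟨a, hw⟩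
        exact ⟨a, walk_mono_s19 (fun x y h => Or.inl h) hw⟩
  exact ⟨hacyc, hlpl, fun a b => by rw [hlpl a, hlpl b]⟩
end
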